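/- The function C(S,t) = S·N(d₁) - K·e^{-r(T-t)}·N(d₂), where N is the standard normal CDF, d₁ = [ln(S/K) + (r + σ²/2)(T-t)]/(σ√(T-t)) and d₂ = d₁ - σ√(T-t), satisfies the Black-Scholes PDE ∂C/∂t + (1/2)σ²S²·∂²C/∂S² + rS·∂C/∂S - rC = 0 for all S > 0 and t < T. -/

import Mathlib

/-!
Write `τ = T - t`. When `C` is differentiated in `S` or in `τ`, the identity
`S N'(d₁) = K e^{-rτ} N'(d₂)` cancels the variations of `N(d₁)` and `N(d₂)` against each other,
up to the variation of `d₁ - d₂ = σ√τ`. Hence the delta is `N(d₁)`, the gamma is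
`N'(d₁) / (S σ √τ)` and the theta `∂C/∂τ` is `σ S N'(d₁) / (2√τ) + r K e^{-rτ} N(d₂)`;
substituting these into the PDE leaves an algebraic identity.
-/

noncomputable def stdNormalCDF (x : ℝ) : ℝ :=
  (Real.sqrt (2 * Real.pi))⁻¹ * ∫ s in Set.Iic x, Real.exp (-s ^ 2 / 2)

open MeasureTheory Real Set

theorem hasDerivAt_integral_Iic {E : Type*} [NormedAddCommGroup E] [NormedSpace ℝ E]
    [CompleteSpace E] {f : ℝ → E} (hf : Integrable f) {x : ℝ} (hx : ContinuousAt f x) :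
    HasDerivAt (fun y => ∫ s in Iic y, f s) (f x) x := by
  have hsplit : (fun y => ∫ s in Iic y, f s) =
      fun y => (∫ s in Iic 0, f s) + ∫ s in (0 : ℝ)..y, f s := by
    funext y
    rw [← intervalIntegral.integral_Iic_sub_Iic hf.integrableOn hf.integrableOn]
    abel
  rw [hsplit]
  exact (intervalIntegral.integral_hasDerivAt_right hf.intervalIntegrable
    hf.aestronglyMeasurable.stronglyMeasurableAtFilter hx).const_add _

noncomputable def stdNormalPDF (x : ℝ) : ℝ :=
  (√(2 * π))⁻¹ * exp (-x ^ 2 / 2)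

theorem hasDerivAt_stdNormalCDF (x : ℝ) : HasDerivAt stdNormalCDF (stdNormalPDF x) x := by
  have hint : Integrable fun s : ℝ => exp (-s ^ 2 / 2) := by
    simpa [div_eq_inv_mul] using integrable_exp_neg_mul_sq (b := 1 / 2) (by norm_num)
  exact (hasDerivAt_integral_Iic hint (by fun_prop)).const_mul _

namespace BlackScholes

variable (σ r K : ℝ)

noncomputable def d₁ (τ S : ℝ) : ℝ :=
  (log (S / K) + (r + σ ^ 2 / 2) * τ) / (σ * √τ)

noncomputable def call (τ S : ℝ) : ℝ :=
  S * stdNormalCDF (d₁ σ r K τ S) - K * exp (-r * τ) * stdNormalCDF (d₁ σ r K τ S - σ * √τ)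

variable {σ r K} {τ S : ℝ}

theorem mul_stdNormalPDF_d₁ (hσ : σ ≠ 0) (hK : 0 < K) (hτ : 0 < τ) (hS : 0 < S) :
    S * stdNormalPDF (d₁ σ r K τ S)
      = K * exp (-r * τ) * stdNormalPDF (d₁ σ r K τ S - σ * √τ) := by
  have hv : σ * √τ ≠ 0 := mul_ne_zero hσ (sqrt_pos.2 hτ).ne'
  have hvd : σ * √τ * d₁ σ r K τ S = log (S / K) + (r + σ ^ 2 / 2) * τ := by
    rw [d₁]; field_simp
  have hexp : -(d₁ σ r K τ S - σ * √τ) ^ 2 / 2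
      = -d₁ σ r K τ S ^ 2 / 2 + log (S / K) + r * τ := by
    linear_combination hvd - σ ^ 2 / 2 * sq_sqrt hτ.le
  rw [stdNormalPDF, stdNormalPDF, hexp, exp_add, exp_add, exp_log (div_pos hS hK),
    neg_mul, exp_neg]
  field_simp [hK.ne']

theorem hasDerivAt_d₁_spot (hK : K ≠ 0) (hS : S ≠ 0) :
    HasDerivAt (d₁ σ r K τ) (S * (σ * √τ))⁻¹ S := by
  have hlog := ((hasDerivAt_id S).div_const K).log (div_ne_zero hS hK)
  refine ((hlog.add_const ((r + σ ^ 2 / 2) * τ)).div_const (σ * √τ)).congr_deriv ?_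
  simp only [id_eq]
  field_simp

theorem hasDerivAt_call_spot (hσ : σ ≠ 0) (hK : 0 < K) (hτ : 0 < τ) (hS : 0 < S) :
    HasDerivAt (call σ r K τ) (stdNormalCDF (d₁ σ r K τ S)) S := by
  have hd := hasDerivAt_d₁_spot (σ := σ) (r := r) (τ := τ) hK.ne' hS.ne'
  have hN₁ := (hasDerivAt_stdNormalCDF _).comp S hd
  have hN₂ := (hasDerivAt_stdNormalCDF _).comp S (hd.sub_const (σ * √τ))
  refine (((hasDerivAt_id' S).mul hN₁).sub (hN₂.const_mul (K * exp (-r * τ)))).congr_deriv ?_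
  simp only [Function.comp_apply]
  linear_combination (S * (σ * √τ))⁻¹ * mul_stdNormalPDF_d₁ (r := r) hσ hK hτ hS

theorem hasDerivAt_deriv_call_spot (hσ : σ ≠ 0) (hK : 0 < K) (hτ : 0 < τ) (hS : 0 < S) :
    HasDerivAt (deriv (call σ r K τ)) (stdNormalPDF (d₁ σ r K τ S) * (S * (σ * √τ))⁻¹) S := by
  have hdelta : deriv (call σ r K τ) =ᶠ[nhds S] fun s => stdNormalCDF (d₁ σ r K τ s) := by
    filter_upwards [Ioi_mem_nhds hS] with s hs using (hasDerivAt_call_spot hσ hK hτ hs).deriv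
  exact ((hasDerivAt_stdNormalCDF _).comp S
    (hasDerivAt_d₁_spot hK.ne' hS.ne')).congr_of_eventuallyEq hdelta

theorem differentiableAt_d₁_maturity (hσ : σ ≠ 0) (hτ : 0 < τ) :
    DifferentiableAt ℝ (fun τ => d₁ σ r K τ S) τ := by
  unfold d₁
  fun_prop (disch := positivity)

theorem hasDerivAt_call_maturity (hσ : σ ≠ 0) (hK : 0 < K) (hτ : 0 < τ) (hS : 0 < S) :
    HasDerivAt (fun τ => call σ r K τ S)
      (σ * S * stdNormalPDF (d₁ σ r K τ S) / (2 * √τ)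
        + r * K * exp (-r * τ) * stdNormalCDF (d₁ σ r K τ S - σ * √τ)) τ := by
  have hd := (differentiableAt_d₁_maturity (r := r) (K := K) (S := S) hσ hτ).hasDerivAt
  have hsqrt := hasDerivAt_sqrt hτ.ne'
  have hN₁ := (hasDerivAt_stdNormalCDF _).comp τ hd
  have hN₂ := (hasDerivAt_stdNormalCDF _).comp τ (hd.sub (hsqrt.const_mul σ))
  have hdisc := ((hasDerivAt_id τ).const_mul (-r)).exp.const_mul K
  refine ((hN₁.const_mul S).sub (hdisc.mul hN₂)).congr_deriv ?_
  simp only [Function.comp_apply, Pi.sub_apply, id_eq]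
  linear_combination (deriv (fun τ => d₁ σ r K τ S) τ - σ * (1 / (2 * √τ)))
    * mul_stdNormalPDF_d₁ (r := r) hσ hK hτ hS

theorem call_pde (hσ : σ ≠ 0) (hK : 0 < K) (hτ : 0 < τ) (hS : 0 < S) :
    -deriv (fun τ => call σ r K τ S) τ
      + 1 / 2 * σ ^ 2 * S ^ 2 * deriv (deriv (call σ r K τ)) S
      + r * S * deriv (call σ r K τ) S - r * call σ r K τ S = 0 := by
  rw [(hasDerivAt_call_maturity hσ hK hτ hS).deriv,
    (hasDerivAt_deriv_call_spot hσ hK hτ hS).deriv, (hasDerivAt_call_spot hσ hK hτ hS).deriv, call]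
  field_simp
  ring

end BlackScholes

/-- The Black-Scholes formula `C(S,t) = S·N(d₁) - K·e^{-r(T-t)}·N(d₂)` satisfies the
Black-Scholes PDE `∂C/∂t + (1/2)σ²S²·∂²C/∂S² + rS·∂C/∂S - rC = 0` for `S > 0`, `t < T`. -/
theorem black_scholes_formula_solves_pde (σ r K T : ℝ) (hσ : 0 < σ) (hK : 0 < K) :
    let d₁ : ℝ → ℝ → ℝ := fun S t =>
      (Real.log (S / K) + (r + σ ^ 2 / 2) * (T - t)) / (σ * Real.sqrt (T - t))
    let d₂ : ℝ → ℝ → ℝ := fun S t => d₁ S t - σ * Real.sqrt (T - t)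
    let C : ℝ → ℝ → ℝ := fun S t =>
      S * stdNormalCDF (d₁ S t) - K * Real.exp (-r * (T - t)) * stdNormalCDF (d₂ S t)
    ∀ S t, 0 < S → t < T →
      deriv (fun t' => C S t') t
        + (1 / 2) * σ ^ 2 * S ^ 2 * deriv (fun s => deriv (fun s' => C s' t) s) S
        + r * S * deriv (fun s => C s t) S - r * C S t = 0 := by
  intro d₁ d₂ C S t hS ht
  change deriv (fun t' => BlackScholes.call σ r K (T - t') S) t
      + 1 / 2 * σ ^ 2 * S ^ 2 * deriv (deriv (BlackScholes.call σ r K (T - t))) S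
      + r * S * deriv (BlackScholes.call σ r K (T - t)) S - r * BlackScholes.call σ r K (T - t) S
    = 0
  rw [deriv_comp_const_sub (f := fun τ => BlackScholes.call σ r K τ S)]
  exact BlackScholes.call_pde hσ.ne' hK (sub_pos.2 ht) hS
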